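/- arXiv:2211.07829 — 2 statements merged into one kernel-verified Lean document; each statement's English description precedes it below -/
import Mathlib

section
/- Let M be a finite matroid on ground set E with rank function Rank, let I_1, …, I_τ be a nested system of spanning sets (NSS) of M, let p ∈ [0,1], and let R be a random subset of E containing each element independently with probability p. Then E[ Rank((I_1 ∪ … ∪ I_τ) ∩ R) ] ≥ (1 − (1−p)^τ) · E[ Rank(R) ]. -/
open Finset

noncomputable section

variable {E : Type*} [Fintype E] [DecidableEq E]

/-- Probability that an independent-inclusion random subset of `E`, in which each element `e`
is included independently with probability `π e`, is exactly the set `A`. -/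
def prodWeight (π : E → ℝ) (A : Finset E) : ℝ :=
  (∏ e ∈ A, π e) * ∏ e ∈ Aᶜ, (1 - π e)

/-- Expectation of `g` under the independent-inclusion random subset with marginals `π`. -/
def expec (π : E → ℝ) (g : Finset E → ℝ) : ℝ :=
  ∑ A : Finset E, prodWeight π A * g A

/-- Total (additive) weight of a finite set. -/
def setWeight (w : E → ℝ) (T : Finset E) : ℝ := ∑ e ∈ T, w e

/-- Value of a best feasible (w.r.t. `𝓘`) subset of `S`, for the objective `f`. -/
def bestVal (𝓘 : Set (Finset E)) (f : Finset E → ℝ) (S : Finset E) : ℝ :=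
  sSup (f '' {T | T ⊆ S ∧ T ∈ 𝓘})

/-- A (finite) matroid on the ground set `E`, given by its independent sets. -/
structure FinMatroid (E : Type*) [Fintype E] [DecidableEq E] where
  Indep : Finset E → Prop
  empty_indep : Indep ∅
  indep_subset : ∀ ⦃S T : Finset E⦄, Indep T → S ⊆ T → Indep S
  indep_exchange : ∀ ⦃S T : Finset E⦄, Indep S → Indep T → S.card < T.card →
    ∃ e ∈ T, e ∉ S ∧ Indep (insert e S)

/-- The rank function of a matroid: the maximum cardinality of an independent subset of `S`. -/
def FinMatroid.rank (M : FinMatroid E) (S : Finset E) : ℕ :=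
  sSup {n | ∃ T ⊆ S, M.Indep T ∧ T.card = n}

/-- `I_1 ∪ ⋯ ∪ I_j` (sets are indexed starting from `1`). -/
def prefixUnion (I : ℕ → Finset E) (j : ℕ) : Finset E :=
  (Finset.Icc 1 j).biUnion I

/-- A nested system of spanning sets for the set system on ground set `G` with rank
function `rk`: each `I_j` lies outside `I_{1:j-1}` and is spanning (full rank) in the
deletion minor obtained by removing `I_{1:j-1}` from `G`. -/
def IsNSS (rk : Finset E → ℕ) (G : Finset E) (τ : ℕ) (I : ℕ → Finset E) : Prop :=
  ∀ j ∈ Finset.Icc 1 τ,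
    I j ⊆ G \ prefixUnion I (j - 1) ∧ rk (I j) = rk (G \ prefixUnion I (j - 1))

/-- `I` is a maximum-`w`-weight independent set of the restriction of `M` to `G`. -/
def IsMaxWeightIndep (M : FinMatroid E) (w : E → ℝ) (G : Finset E) (I : Finset E) : Prop :=
  I ⊆ G ∧ M.Indep I ∧ ∀ J ⊆ G, M.Indep J → setWeight w J ≤ setWeight w I

/-- `I` is a maximum-`w`-weight base of the restriction (deletion minor) of `M` to `G`. -/
def IsMaxWeightBase (M : FinMatroid E) (w : E → ℝ) (G : Finset E) (I : Finset E) : Prop :=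
  I ⊆ G ∧ M.Indep I ∧ M.rank I = M.rank G ∧
    ∀ J ⊆ G, M.Indep J → M.rank J = M.rank G → setWeight w J ≤ setWeight w I

/-! ### Auxiliary matroid rank lemmas -/

namespace FinMatroid
variable (M : FinMatroid E)

lemma rank_set_nonempty (S : Finset E) : {n | ∃ T ⊆ S, M.Indep T ∧ T.card = n}.Nonempty :=
  ⟨0, ∅, empty_subset _, M.empty_indep, card_empty⟩

lemma rank_set_bdd (S : Finset E) : BddAbove {n | ∃ T ⊆ S, M.Indep T ∧ T.card = n} :=
  ⟨S.card, fun _ ⟨_, hTS, _, hc⟩ => hc ▸ card_le_card hTS⟩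

lemma exists_basis (S : Finset E) : ∃ T ⊆ S, M.Indep T ∧ T.card = M.rank S :=
  Nat.sSup_mem (M.rank_set_nonempty S) (M.rank_set_bdd S)

lemma card_le_rank {T S : Finset E} (hTS : T ⊆ S) (hT : M.Indep T) : T.card ≤ M.rank S :=
  le_csSup (M.rank_set_bdd S) ⟨T, hTS, hT, rfl⟩

lemma rank_mono {S S' : Finset E} (h : S ⊆ S') : M.rank S ≤ M.rank S' := by
  obtain ⟨T, hTS, hT, hc⟩ := M.exists_basis S
  exact hc ▸ M.card_le_rank (hTS.trans h) hT

lemma rank_empty : M.rank (∅ : Finset E) = 0 := by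
  obtain ⟨T, hTS, _, hc⟩ := M.exists_basis (∅ : Finset E)
  rw [← hc, card_eq_zero, ← subset_empty.mp hTS]

/-- Extend an independent subset of `S` to a basis of `S`. -/
lemma exists_basis_superset {C S : Finset E} (hCS : C ⊆ S) (hC : M.Indep C) :
    ∃ B, C ⊆ B ∧ B ⊆ S ∧ M.Indep B ∧ B.card = M.rank S := by
  obtain hlt | heq := lt_or_eq_of_le (M.card_le_rank hCS hC)
  · obtain ⟨T, hTS, hT, hc⟩ := M.exists_basis S
    obtain ⟨e, heT, heC, hins⟩ := M.indep_exchange hC hT (hc ▸ hlt)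
    have hsub : insert e C ⊆ S := insert_subset (hTS heT) hCS
    have hcard : (insert e C).card = C.card + 1 := card_insert_of_notMem heC
    have := exists_basis_superset hsub hins
    obtain ⟨B, h1, h2, h3, h4⟩ := this
    exact ⟨B, (subset_insert e C).trans h1, h2, h3, h4⟩
  · exact ⟨C, subset_rfl, hCS, hC, heq⟩
termination_by M.rank S - C.card
decreasing_by
  simp only [hcard]
  omega

lemma rank_insert_eq_of_subset {Y C : Finset E} (hCY : C ⊆ Y) {e : E}
    (h : M.rank (insert e C) = M.rank C) : M.rank (insert e Y) = M.rank Y := by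
  by_cases heY : e ∈ Y
  · rw [insert_eq_self.mpr heY]
  refine le_antisymm ?_ (M.rank_mono (subset_insert e Y))
  by_contra hc
  push_neg at hc
  obtain ⟨BC, hBCs, hBCi, hBCc⟩ := M.exists_basis C
  obtain ⟨BY, hBY1, hBY2, hBY3, hBY4⟩ := M.exists_basis_superset (hBCs.trans hCY) hBCi
  obtain ⟨Be, hBes, hBei, hBec⟩ := M.exists_basis (insert e Y)
  obtain ⟨f, hfBe, hfBY, hfi⟩ := M.indep_exchange hBY3 hBei (by omega)
  have hf : f = e := by
    rcases mem_insert.mp (hBes hfBe) with h' | h'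
    · exact h'
    · exfalso
      have := M.card_le_rank (insert_subset h' hBY2) hfi
      rw [card_insert_of_notMem hfBY] at this
      omega
  subst hf
  have heC : f ∉ BC := fun h' => heY (hCY (hBCs h'))
  have hind : M.Indep (insert f BC) :=
    M.indep_subset hfi (insert_subset_insert _ hBY1)
  have := M.card_le_rank
    (insert_subset (mem_insert_self f C) ((hBCs.trans (subset_insert f C)))) hind
  rw [card_insert_of_notMem heC, hBCc, h] at this
  omega

/-- If `I ⊆ F` have the same rank then `I` spans `F`: unions agree in rank. -/
lemma rank_union_eq_of_spans {I F : Finset E} (hIF : I ⊆ F) (hr : M.rank I = M.rank F)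
    (X : Finset E) : M.rank (X ∪ F) = M.rank (X ∪ I) := by
  by_cases hFI : F ⊆ I
  · rw [subset_antisymm hFI hIF]
  obtain ⟨e, heF, heI⟩ := not_subset.mp hFI
  have h1 : M.rank (insert e I) = M.rank I :=
    le_antisymm (hr ▸ M.rank_mono (insert_subset heF hIF)) (M.rank_mono (subset_insert e I))
  have h2 : M.rank (X ∪ insert e I) = M.rank (X ∪ I) := by
    rw [union_insert]
    exact M.rank_insert_eq_of_subset subset_union_right h1
  have h3 : M.rank (X ∪ F) = M.rank (X ∪ insert e I) :=
    rank_union_eq_of_spans (insert_subset heF hIF) (h1.trans hr) X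
  rw [h3, h2]
termination_by (F \ I).card
decreasing_by
  apply card_lt_card
  rw [ssubset_iff_of_subset (sdiff_subset_sdiff subset_rfl (subset_insert e I))]
  exact ⟨e, mem_sdiff.mpr ⟨heF, heI⟩, fun h => (mem_sdiff.mp h).2 (mem_insert_self e I)⟩

end FinMatroid

/-! ### Auxiliary expectation lemmas -/

variable {p : ℝ}

lemma prodWeight_const (p : ℝ) (A : Finset E) :
    prodWeight (fun _ => p) A = p ^ A.card * (1 - p) ^ (Fintype.card E - A.card) := by
  simp [prodWeight, card_compl]

lemma prodWeight_nonneg (hp0 : 0 ≤ p) (hp1 : p ≤ 1) (A : Finset E) :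
    0 ≤ prodWeight (fun _ => p) A := by
  rw [prodWeight_const]
  have : (0:ℝ) ≤ 1 - p := by linarith
  positivity

lemma prodWeight_insert {e : E} {A : Finset E} (he : e ∉ A) :
    (1 - p) * prodWeight (fun _ => p) (insert e A) = p * prodWeight (fun _ => p) A := by
  rw [prodWeight_const, prodWeight_const, card_insert_of_notMem he]
  have hle : A.card + 1 ≤ Fintype.card E := by
    simpa [card_insert_of_notMem he] using card_le_univ (insert e A)
  have h1 : Fintype.card E - A.card = (Fintype.card E - (A.card + 1)) + 1 := by omega
  rw [h1, pow_succ, pow_succ]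
  ring

lemma sum_split (e : E) (f : Finset E → ℝ) :
    ∑ A : Finset E, f A
      = ∑ A ∈ univ.filter (fun A : Finset E => e ∉ A), (f A + f (insert e A)) := by
  rw [sum_add_distrib, ← sum_filter_add_sum_filter_not univ (fun A : Finset E => e ∉ A) f]
  congr 1
  refine sum_nbij' (fun A => A.erase e) (fun A => insert e A) ?_ ?_ ?_ ?_ ?_
  · intro A _
    simp only [mem_filter, not_not, mem_univ, true_and]
    exact notMem_erase e A
  · intro A _
    simp only [mem_filter, not_not, mem_univ, true_and]
    exact mem_insert_self e A
  · intro A hA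
    simp only [mem_filter, not_not, mem_univ, true_and] at hA
    exact insert_erase hA
  · intro A hA
    simp only [mem_filter, mem_univ, true_and] at hA
    exact erase_insert hA
  · intro A hA
    simp only [mem_filter, not_not, mem_univ, true_and] at hA
    rw [insert_erase hA]

lemma expec_indicator (e : E) (φ : Finset E → ℝ)
    (hφ : ∀ A, e ∉ A → φ (insert e A) = φ A) :
    expec (fun _ => p) (fun A => if e ∈ A then φ A else 0) = p * expec (fun _ => p) φ := by
  unfold expec
  rw [sum_split e, sum_split e (fun A => prodWeight (fun _ => p) A * φ A), mul_sum]
  refine sum_congr rfl fun A hA => ?_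
  simp only [mem_filter, mem_univ, true_and] at hA
  simp only []
  rw [if_neg hA, if_pos (mem_insert_self e A), hφ A hA]
  have hw := prodWeight_insert (p := p) hA
  linear_combination (φ A) * hw

lemma expec_sum (π : E → ℝ) (ψ : E → Finset E → ℝ) :
    expec π (fun A => ∑ e : E, ψ e A) = ∑ e : E, expec π (fun A => ψ e A) := by
  simp only [expec, mul_sum]
  exact sum_comm

lemma expec_add (π : E → ℝ) (g h : Finset E → ℝ) :
    expec π (fun A => g A + h A) = expec π g + expec π h := by
  simp [expec, mul_add, sum_add_distrib]

lemma expec_mono (hp0 : 0 ≤ p) (hp1 : p ≤ 1) {g h : Finset E → ℝ}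
    (hgh : ∀ A, g A ≤ h A) :
    expec (fun _ => p) g ≤ expec (fun _ => p) h :=
  sum_le_sum fun A _ => mul_le_mul_of_nonneg_left (hgh A) (prodWeight_nonneg hp0 hp1 A)

lemma card_cast_eq_sum (S : Finset E) :
    ((S.card : ℝ)) = ∑ e : E, (if e ∈ S then (1:ℝ) else 0) := by
  simp [Finset.sum_ite_mem]

/-! ### The key one-round step -/

lemma step_round (M : FinMatroid E) (U J : Finset E) (hJU : J ⊆ univ \ U)
    (hrk : M.rank J = M.rank (univ \ U)) (hp0 : 0 ≤ p) (hp1 : p ≤ 1) :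
    (1 - p) * expec (fun _ => p) (fun A => (M.rank (U ∩ A) : ℝ))
      + p * expec (fun _ => p) (fun A => (M.rank A : ℝ))
      ≤ expec (fun _ => p) (fun A => (M.rank ((U ∪ J) ∩ A) : ℝ)) := by
  classical
  have hJU' : ∀ x ∈ J, x ∉ U := fun x hx => (mem_sdiff.mp (hJU hx)).2
  -- choose a basis B₀ of S∩U together with an extension B₁ inside (S∩U) ∪ J
  have hex : ∀ S : Finset E, ∃ BB : Finset E × Finset E,
      BB.1 ⊆ S ∩ U ∧ BB.1 ⊆ BB.2 ∧ M.Indep BB.2 ∧ BB.2 \ BB.1 ⊆ J ∧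
      BB.1.card = M.rank (S ∩ U) ∧ BB.2.card = M.rank ((S ∩ U) ∪ J) := by
    intro S
    obtain ⟨B0, hB0s, hB0i, hB0c⟩ := M.exists_basis (S ∩ U)
    obtain ⟨B1, h01, hB1s, hB1i, hB1c⟩ :=
      M.exists_basis_superset (hB0s.trans subset_union_left) hB0i
    refine ⟨(B0, B1), hB0s, h01, hB1i, ?_, hB0c, hB1c⟩
    intro x hx
    obtain ⟨hx1, hx0⟩ := mem_sdiff.mp hx
    rcases mem_union.mp (hB1s hx1) with h | h
    · exfalso
      have hind : M.Indep (insert x B0) := M.indep_subset hB1i (insert_subset hx1 h01)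
      have := M.card_le_rank (insert_subset h hB0s) hind
      rw [card_insert_of_notMem hx0, hB0c] at this
      omega
    · exact h
  choose f h1 h2 h3 h4 h5 h6 using hex
  set D : Finset E → Finset E := fun A => (f (A ∩ U)).2 \ (f (A ∩ U)).1 with hD
  have hAU : ∀ A : Finset E, (A ∩ U) ∩ U = A ∩ U := fun A => by
    rw [inter_assoc, inter_self]
  have hDJ : ∀ A, D A ⊆ J := fun A => h4 (A ∩ U)
  -- pointwise inequality (I)
  have ptI : ∀ A : Finset E,
      (M.rank (U ∩ A) : ℝ) + ((D A ∩ A).card : ℝ) ≤ (M.rank ((U ∪ J) ∩ A) : ℝ) := by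
    intro A
    have hB0sub : (f (A ∩ U)).1 ⊆ A ∩ U := by
      have := h1 (A ∩ U); rwa [hAU] at this
    have hTind : M.Indep ((f (A ∩ U)).1 ∪ (D A ∩ A)) := by
      refine M.indep_subset (h3 (A ∩ U)) (union_subset (h2 (A ∩ U)) ?_)
      exact (inter_subset_left).trans sdiff_subset
    have hTsub : (f (A ∩ U)).1 ∪ (D A ∩ A) ⊆ (U ∪ J) ∩ A := by
      refine union_subset ?_ ?_
      · intro x hx
        have := hB0sub hx
        exact mem_inter.mpr ⟨mem_union_left _ (mem_inter.mp this).2,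
          (mem_inter.mp this).1⟩
      · intro x hx
        obtain ⟨hx1, hx2⟩ := mem_inter.mp hx
        exact mem_inter.mpr ⟨mem_union_right _ (hDJ A hx1), hx2⟩
    have hdisj : Disjoint ((f (A ∩ U)).1) (D A ∩ A) := by
      refine disjoint_left.mpr fun x hx hx' => ?_
      exact hJU' x (hDJ A (mem_inter.mp hx').1) (mem_inter.mp (hB0sub hx)).2
    have hcard := M.card_le_rank hTsub hTind
    rw [card_union_of_disjoint hdisj, h5 (A ∩ U), hAU, inter_comm A U] at hcard
    exact_mod_cast hcard
  -- pointwise inequality (II)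
  have ptII : ∀ A : Finset E,
      (M.rank A : ℝ) ≤ (M.rank (U ∩ A) : ℝ) + ((D A).card : ℝ) := by
    intro A
    have hsub : A ⊆ (A ∩ U) ∪ (univ \ U) := by
      intro x hx
      by_cases hxU : x ∈ U
      · exact mem_union_left _ (mem_inter.mpr ⟨hx, hxU⟩)
      · exact mem_union_right _ (mem_sdiff.mpr ⟨mem_univ x, hxU⟩)
    have e1 : M.rank A ≤ M.rank ((A ∩ U) ∪ (univ \ U)) := M.rank_mono hsub
    have e2 : M.rank ((A ∩ U) ∪ (univ \ U)) = M.rank ((A ∩ U) ∪ J) :=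
      M.rank_union_eq_of_spans hJU hrk (A ∩ U)
    have e3 : ((f (A ∩ U)).2 \ (f (A ∩ U)).1).card + (f (A ∩ U)).1.card
        = (f (A ∩ U)).2.card := card_sdiff_add_card_eq_card (h2 (A ∩ U))
    have e4 := h6 (A ∩ U)
    have e5 := h5 (A ∩ U)
    rw [hAU] at e4 e5
    have : M.rank A ≤ M.rank (A ∩ U) + (D A).card := by
      simp only [hD]
      omega
    rw [inter_comm U A]
    exact_mod_cast this
  -- the sampling identity
  have hsamp : expec (fun _ => p) (fun A => ((D A ∩ A).card : ℝ))
      = p * expec (fun _ => p) (fun A => ((D A).card : ℝ)) := by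
    have lhs1 : expec (fun _ => p) (fun A => ((D A ∩ A).card : ℝ))
        = ∑ e : E, expec (fun _ => p)
            (fun A => if e ∈ A then (if e ∈ D A then (1:ℝ) else 0) else 0) := by
      rw [← expec_sum]
      congr 1
      funext A
      rw [card_cast_eq_sum]
      refine Finset.sum_congr rfl fun e _ => ?_
      by_cases hA : e ∈ A <;> by_cases hDe : e ∈ D A <;>
        simp [mem_inter, hA, hDe]
    have rhs1 : expec (fun _ => p) (fun A => ((D A).card : ℝ))
        = ∑ e : E, expec (fun _ => p) (fun A => if e ∈ D A then (1:ℝ) else 0) := by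
      rw [← expec_sum]
      congr 1
      funext A
      rw [card_cast_eq_sum]
    rw [lhs1, rhs1, mul_sum]
    refine Finset.sum_congr rfl fun e _ => ?_
    by_cases heU : e ∈ U
    · have hze : ∀ A : Finset E, e ∉ D A := fun A h => hJU' e (hDJ A h) heU
      have hfun1 : (fun A : Finset E => if e ∈ A then (if e ∈ D A then (1:ℝ) else 0) else 0)
          = fun _ => (0:ℝ) := by
        funext A; simp [hze A]
      have hfun2 : (fun A : Finset E => if e ∈ D A then (1:ℝ) else 0)
          = fun _ => (0:ℝ) := by
        funext A; rw [if_neg (hze A)]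
      rw [hfun1, hfun2]
      simp [expec]
    · refine expec_indicator e _ fun A heA => ?_
      have hins : (insert e A) ∩ U = A ∩ U := insert_inter_of_notMem heU
      simp only [hD, hins]
  -- combine everything
  have eI : expec (fun _ => p) (fun A => (M.rank (U ∩ A) : ℝ))
      + expec (fun _ => p) (fun A => ((D A ∩ A).card : ℝ))
      ≤ expec (fun _ => p) (fun A => (M.rank ((U ∪ J) ∩ A) : ℝ)) := by
    rw [← expec_add]
    exact expec_mono hp0 hp1 ptI
  have eII : expec (fun _ => p) (fun A => (M.rank A : ℝ))
      ≤ expec (fun _ => p) (fun A => (M.rank (U ∩ A) : ℝ))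
        + expec (fun _ => p) (fun A => ((D A).card : ℝ)) := by
    rw [← expec_add]
    exact expec_mono hp0 hp1 ptII
  have := mul_le_mul_of_nonneg_left eII hp0
  linarith [hsamp ▸ eI, this]

lemma isNSS_restrict {rk : Finset E → ℕ} {G : Finset E} {τ : ℕ} {I : ℕ → Finset E}
    (h : IsNSS rk G (τ + 1) I) : IsNSS rk G τ I := by
  intro j hj
  refine h j ?_
  simp only [mem_Icc] at *
  omega

lemma prefixUnion_succ (I : ℕ → Finset E) (τ : ℕ) :
    prefixUnion I (τ + 1) = prefixUnion I τ ∪ I (τ + 1) := by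
  unfold prefixUnion
  have : Finset.Icc 1 (τ + 1) = insert (τ + 1) (Finset.Icc 1 τ) := by
    ext x; simp only [mem_Icc, mem_insert]; omega
  rw [this, biUnion_insert, union_comm]

lemma prefixUnion_zero (I : ℕ → Finset E) : prefixUnion I 0 = ∅ := by
  unfold prefixUnion
  simp

/-- If `I_1, …, I_τ` is a nested system of spanning sets of the matroid
`M` and `R` includes each element independently with probability `p`, then
`E[Rank((I_1 ∪ ⋯ ∪ I_τ) ∩ R)] ≥ (1 − (1−p)^τ) · E[Rank(R)]`. -/
theorem stmt_6 (M : FinMatroid E) (τ : ℕ) (I : ℕ → Finset E)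
    (hNSS : IsNSS M.rank Finset.univ τ I)
    (p : ℝ) (hp0 : 0 ≤ p) (hp1 : p ≤ 1) :
    (1 - (1 - p) ^ τ) * expec (fun _ => p) (fun A => (M.rank A : ℝ))
      ≤ expec (fun _ => p) (fun A => (M.rank (prefixUnion I τ ∩ A) : ℝ)) := by
  induction τ with
  | zero =>
      have : (fun A : Finset E => (M.rank (prefixUnion I 0 ∩ A) : ℝ)) = fun _ => (0:ℝ) := by
        funext A
        rw [prefixUnion_zero, empty_inter, M.rank_empty]
        norm_num
      rw [this]
      simp [expec]
  | succ τ ih =>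
      have IH := ih (isNSS_restrict hNSS)
      obtain ⟨hJsub, hJrk⟩ := hNSS (τ + 1) (by simp [mem_Icc])
      have hsimp : (τ + 1) - 1 = τ := by omega
      rw [hsimp] at hJsub hJrk
      have hstep := step_round (p := p) M (prefixUnion I τ) (I (τ + 1)) hJsub hJrk hp0 hp1
      have hrw : (fun A : Finset E => (M.rank (prefixUnion I (τ + 1) ∩ A) : ℝ))
          = fun A => (M.rank ((prefixUnion I τ ∪ I (τ + 1)) ∩ A) : ℝ) := by
        funext A
        rw [prefixUnion_succ]
      rw [hrw]
      have h1p : (0:ℝ) ≤ 1 - p := by linarith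
      have hmul := mul_le_mul_of_nonneg_left IH h1p
      have hid : (1 - (1 - p) ^ (τ + 1)) * expec (fun _ => p) (fun A => (M.rank A : ℝ))
          = (1 - p) * ((1 - (1 - p) ^ τ) * expec (fun _ => p) (fun A => (M.rank A : ℝ)))
            + p * expec (fun _ => p) (fun A => (M.rank A : ℝ)) := by
        ring
      linarith
end
end

section
/- Let M = (E, 𝓘) be a finite matroid, let S_1 and S_2 be two independent sets of M, let p ∈ [0,1], and let R be a random subset of E containing each element independently with probability p. Then there exists a (deterministic) map T : 2^E → 2^E such that the random set T(R) satisfies: (1) S_1 ∩ S_2 ⊆ T(R) with probability 1; (2) T(R) ∈ 𝓘 with probability 1; (3) T(R) ⊆ (S_1 ∩ R) ∪ S_2, and (S_1 \ S_2) ∩ R ⊆ T(R), so Pr[e ∈ T(R)] = p for every e ∈ S_1 \ S_2; and (4) Pr[f ∈ T(R)] ≥ 1 − p for every f ∈ S_2 \ S_1. -/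
open Finset

noncomputable section

variable {E : Type*} [Fintype E] [DecidableEq E]

/-!
Build `T` by induction on `|S₁ \ S₂|`, branching on the coin of one `e ∈ S₁ \ S₂`. Pick `f` in
the fundamental circuit of `e` in `S₂` outside the closure of `S₁ - e` (it exists because `e`
itself lies outside that closure); then `S₂ - f + e` and `S₁ - e + f` are both independent (if
`S₂ + e` is already independent, no `f` is needed). If `e ∈ R`, recurse on `(S₁, S₂ - f + e)`; if
`e ∉ R`, recurse on `(S₁ - e + f, S₂)`, where `f` lies in both sets and is therefore kept. So `f`
is lost with probability at most `p`, and any other `f' ∈ S₂ \ S₁` with probability at most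
`p·p + (1 - p)·p = p`. The branches are independent of the coin of `e` because each recursive map
only looks at `R ∩ (S₁ \ S₂)`.
-/

open Set in
theorem Matroid.Indep.exists_exchange_subset {α : Type*} {M : Matroid α} {I J : Set α} {e : α}
    (hI : M.Indep I) (hJ : M.Indep J) (heI : e ∈ I) (heJ : e ∉ J) :
    ∃ F ⊆ J \ I, M.Indep (insert e (J \ F)) ∧ M.Indep ((I \ {e}) ∪ F) := by
  by_cases hins : M.Indep (insert e J)
  · exact ⟨∅, empty_subset _, by simpa, by simpa using hI.subset sdiff_subset⟩
  have heE : e ∈ M.E := hI.subset_ground heI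
  have hecl : e ∈ M.closure J :=
    (hJ.mem_closure_iff_of_notMem heJ).2 ⟨hins, insert_subset heE hJ.subset_ground⟩
  have hI' : M.Indep (I \ {e}) := hI.subset sdiff_subset
  have heB : e ∉ M.closure (I \ {e}) :=
    (hI'.notMem_closure_iff heE).2 ⟨by simpa [insert_eq_of_mem heI], by simp⟩
  have hC := hJ.fundCircuit_isCircuit hecl heJ
  obtain ⟨f, ⟨hfC, hfe : f ≠ e⟩, hfB⟩ : ∃ f ∈ M.fundCircuit e J \ {e}, f ∉ M.closure (I \ {e}) := by
    by_contra! h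
    exact heB (M.closure_subset_closure_of_subset_closure h
      (hC.mem_closure_sdiff_singleton_of_mem (M.mem_fundCircuit e J)))
  have hfJ : f ∈ J := (M.fundCircuit_subset_insert e J hfC).resolve_left hfe
  have hfI : f ∉ I := fun hfI => hfB (M.subset_closure _ hI'.subset_ground ⟨hfI, hfe⟩)
  refine ⟨{f}, by simp [hfJ, hfI], ?_, ?_⟩
  · rw [insert_sdiff_singleton_comm hfe.symm]
    exact (hJ.mem_fundCircuit_iff hecl heJ).1 hfC
  · rw [union_singleton, hI'.insert_indep_iff_of_notMem (fun h => hfI h.1)]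
    exact ⟨hJ.subset_ground hfJ, hfB⟩

namespace FinMatroid

def toMatroid (M : FinMatroid E) : Matroid E :=
  (IndepMatroid.ofFinset Set.univ M.Indep M.empty_indep M.indep_subset M.indep_exchange
    fun _ _ => Set.subset_univ _).matroid

theorem toMatroid_indep_coe (M : FinMatroid E) {I : Finset E} :
    M.toMatroid.Indep I ↔ M.Indep I := by
  simp [toMatroid]

theorem exists_exchange_subset (M : FinMatroid E) {S₁ S₂ : Finset E} {e : E}
    (h₁ : M.Indep S₁) (h₂ : M.Indep S₂) (he : e ∈ S₁ \ S₂) :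
    ∃ F ⊆ S₂ \ S₁, M.Indep (insert e (S₂ \ F)) ∧ M.Indep (S₁.erase e ∪ F) := by
  rw [mem_sdiff] at he
  obtain ⟨F, hF, hF₂, hF₁⟩ := (M.toMatroid_indep_coe.2 h₁).exists_exchange_subset
    (M.toMatroid_indep_coe.2 h₂) (mem_coe.2 he.1) (mem_coe.2.mt he.2)
  obtain ⟨F, rfl⟩ := F.toFinite.exists_finset_coe
  refine ⟨F, by exact_mod_cast hF, ?_, ?_⟩
  · exact M.toMatroid_indep_coe.1 (by push_cast; exact hF₂)
  · exact M.toMatroid_indep_coe.1 (by push_cast; exact hF₁)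

end FinMatroid

section Expectation

variable (π : E → ℝ)

theorem sum_prodWeight : ∑ A : Finset E, prodWeight π A = 1 := by
  have h := prod_add π (fun e => 1 - π e) (univ : Finset E)
  simp only [add_sub_cancel, prod_const_one, powerset_univ] at h
  rw [h]
  exact sum_congr rfl fun A _ => by rw [prodWeight, compl_eq_univ_sdiff]

theorem expec_const (c : ℝ) : expec π (fun _ => c) = c := by
  rw [expec, ← sum_mul, sum_prodWeight, one_mul]

theorem expec_one_sub (g : Finset E → ℝ) : expec π (fun A => 1 - g A) = 1 - expec π g := by
  simp only [expec, mul_sub, mul_one, sum_sub_distrib, sum_prodWeight]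

theorem prodWeight_insert_mul {e : E} {A : Finset E} (he : e ∉ A) :
    prodWeight π (insert e A) * (1 - π e) = prodWeight π A * π e := by
  have hc : e ∈ Aᶜ := mem_compl.2 he
  rw [prodWeight, prodWeight, prod_insert he, compl_insert, ← mul_prod_erase _ _ hc]
  ring

theorem expec_ite_mem (e : E) (g₁ g₀ : Finset E → ℝ)
    (h₁ : ∀ A, g₁ (insert e A) = g₁ A) (h₀ : ∀ A, g₀ (insert e A) = g₀ A) :
    expec π (fun A => if e ∈ A then g₁ A else g₀ A) =
      π e * expec π g₁ + (1 - π e) * expec π g₀ := by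
  have hsplit : ∀ g : Finset E → ℝ, expec π g = ∑ t ∈ (univ.erase e).powerset,
      (prodWeight π t * g t + prodWeight π (insert e t) * g (insert e t)) := fun g => by
    rw [expec, ← powerset_univ, ← insert_erase (mem_univ e),
      sum_powerset_insert (notMem_erase e univ), ← sum_add_distrib, insert_erase (mem_univ e)]
  rw [hsplit, hsplit, hsplit, mul_sum, mul_sum, ← sum_add_distrib]
  refine sum_congr rfl fun t ht => ?_
  have het : e ∉ t := fun h => notMem_erase e univ (mem_powerset.1 ht h)
  simp only [het, if_false, mem_insert_self, if_true, h₁, h₀]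
  linear_combination (g₁ t - g₀ t) * prodWeight_insert_mul π het

theorem expec_indicator_mem (e : E) : expec π (fun A => if e ∈ A then 1 else 0) = π e := by
  rw [expec_ite_mem π e _ _ (fun _ => rfl) (fun _ => rfl), expec_const, expec_const]
  ring

variable {π}

theorem prodWeight_nonneg_s9 (h0 : ∀ e, 0 ≤ π e) (h1 : ∀ e, π e ≤ 1) (A : Finset E) :
    0 ≤ prodWeight π A :=
  mul_nonneg (prod_nonneg fun e _ => h0 e) (prod_nonneg fun e _ => sub_nonneg.2 (h1 e))

theorem expec_mono_s9 (h0 : ∀ e, 0 ≤ π e) (h1 : ∀ e, π e ≤ 1) {g h : Finset E → ℝ}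
    (hgh : ∀ A, g A ≤ h A) : expec π g ≤ expec π h :=
  sum_le_sum fun A _ => mul_le_mul_of_nonneg_left (hgh A) (prodWeight_nonneg_s9 h0 h1 A)

end Expectation

theorem Finset.sdiff_insert_sdiff_of_subset {α : Type*} [DecidableEq α] {s t u : Finset α}
    (a : α) (hu : u ⊆ t \ s) : s \ insert a (t \ u) = (s \ t).erase a := by
  ext x
  have := @hu x
  simp only [mem_sdiff, mem_insert, mem_erase] at this ⊢
  tauto

theorem Finset.erase_union_sdiff_of_subset {α : Type*} [DecidableEq α] {s t u : Finset α}
    (a : α) (hu : u ⊆ t) : (s.erase a ∪ u) \ t = (s \ t).erase a := by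
  rw [union_sdiff_distrib, sdiff_eq_empty_iff_subset.2 hu, union_empty, erase_sdiff_comm]

namespace FinMatroid

structure IsExchangeMap (M : FinMatroid E) (p : ℝ) (S₁ S₂ : Finset E)
    (T : Finset E → Finset E) : Prop where
  inter_subset : ∀ A, S₁ ∩ S₂ ⊆ T A
  indep : ∀ A, M.Indep (T A)
  subset_union : ∀ A, T A ⊆ (S₁ ∩ A) ∪ S₂
  sdiff_inter_subset : ∀ A, (S₁ \ S₂) ∩ A ⊆ T A
  apply_inter_sdiff : ∀ A, T (A ∩ (S₁ \ S₂)) = T A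
  expec_notMem_le : ∀ f ∈ S₂ \ S₁, expec (fun _ => p) (fun A => if f ∈ T A then 0 else 1) ≤ p

variable {M : FinMatroid E} {p : ℝ} {S₁ S₂ : Finset E}

theorem isExchangeMap_const (hp0 : 0 ≤ p) (h₂ : M.Indep S₂)
    (h : S₁ \ S₂ = ∅) : M.IsExchangeMap p S₁ S₂ fun _ => S₂ where
  inter_subset _ := inter_subset_right
  indep _ := h₂
  subset_union _ := subset_union_right
  sdiff_inter_subset _ := by simp [h]
  apply_inter_sdiff _ := rfl
  expec_notMem_le f hf := by simp [(mem_sdiff.1 hf).1, expec_const, hp0]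

theorem IsExchangeMap.apply_insert {T : Finset E → Finset E}
    (hT : M.IsExchangeMap p S₁ S₂ T) {e : E} (he : e ∉ S₁ \ S₂) (A : Finset E) :
    T (insert e A) = T A := by
  rw [← hT.apply_inter_sdiff, insert_inter_of_notMem he, hT.apply_inter_sdiff]

theorem IsExchangeMap.mem_iff {T : Finset E → Finset E}
    (hT : M.IsExchangeMap p S₁ S₂ T) {e : E} (he : e ∈ S₁ \ S₂) (A : Finset E) :
    e ∈ T A ↔ e ∈ A := by
  refine ⟨fun h => ?_, fun h => hT.sdiff_inter_subset A (mem_inter.2 ⟨he, h⟩)⟩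
  have := hT.subset_union A h
  simp only [mem_union, mem_inter] at this
  exact this.elim And.right fun h' => absurd h' (mem_sdiff.1 he).2

theorem IsExchangeMap.expec_notMem_ite_le (hp0 : 0 ≤ p) (hp1 : p ≤ 1) {F : Finset E}
    {e f : E} (hF : F ⊆ S₂ \ S₁) {T₁ T₀ : Finset E → Finset E}
    (h₁ : M.IsExchangeMap p S₁ (insert e (S₂ \ F)) T₁)
    (h₀ : M.IsExchangeMap p (S₁.erase e ∪ F) S₂ T₀) (hf : f ∈ S₂ \ S₁) :
    expec (fun _ => p) (fun A => if f ∈ (if e ∈ A then T₁ A else T₀ A) then 0 else 1) ≤ p := by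
  have hT₁ := h₁.apply_insert (e := e) (by
    rw [sdiff_insert_sdiff_of_subset e hF]; exact notMem_erase e _)
  have hT₀ := h₀.apply_insert (e := e) (by
    rw [erase_union_sdiff_of_subset e (hF.trans sdiff_subset)]; exact notMem_erase e _)
  set X₁ := expec (fun _ => p) fun A => if f ∈ T₁ A then 0 else 1
  set X₀ := expec (fun _ => p) fun A => if f ∈ T₀ A then 0 else 1
  have hsplit := expec_ite_mem (fun _ => p) e (fun A => if f ∈ T₁ A then (0 : ℝ) else 1)
    (fun A => if f ∈ T₀ A then 0 else 1) (fun A => by rw [hT₁]) (fun A => by rw [hT₀])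
  calc _ = p * X₁ + (1 - p) * X₀ := by
        rw [← hsplit]; congr 1; funext A; split_ifs <;> rfl
    _ ≤ p := by
      by_cases hfF : f ∈ F
      · have hX₀ : X₀ = 0 := by
          have hf₀ : ∀ A, f ∈ T₀ A := fun A => h₀.inter_subset A (by grind)
          simp only [X₀, hf₀, if_true, expec_const]
        have hX₁ : X₁ ≤ 1 :=
          (expec_mono_s9 (fun _ => hp0) (fun _ => hp1) (g := fun A => if f ∈ T₁ A then 0 else 1)
            (fun A => show _ ≤ (1 : ℝ) by split_ifs <;> norm_num)).trans_eq (expec_const _ 1)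
        nlinarith
      · have hX₁ : X₁ ≤ p := h₁.expec_notMem_le f (by grind)
        have hX₀ : X₀ ≤ p := h₀.expec_notMem_le f (by grind)
        nlinarith

theorem IsExchangeMap.ite (hp0 : 0 ≤ p) (hp1 : p ≤ 1) {F : Finset E} {e : E}
    (he : e ∈ S₁ \ S₂) (hF : F ⊆ S₂ \ S₁) {T₁ T₀ : Finset E → Finset E}
    (h₁ : M.IsExchangeMap p S₁ (insert e (S₂ \ F)) T₁)
    (h₀ : M.IsExchangeMap p (S₁.erase e ∪ F) S₂ T₀) :
    M.IsExchangeMap p S₁ S₂ fun A => if e ∈ A then T₁ A else T₀ A where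
  inter_subset A x hx := by
    split_ifs
    · exact h₁.inter_subset A (by grind)
    · exact h₀.inter_subset A (by grind)
  indep A := by
    split_ifs
    · exact h₁.indep A
    · exact h₀.indep A
  subset_union A x hx := by
    split_ifs at hx
    · have := h₁.subset_union A hx
      grind
    · have := h₀.subset_union A hx
      grind
  sdiff_inter_subset A x hx := by
    split_ifs
    · by_cases hxe : x = e
      · exact h₁.inter_subset A (by grind)
      · exact h₁.sdiff_inter_subset A (by grind)
    · exact h₀.sdiff_inter_subset A (by grind)
  apply_inter_sdiff A := by
    have hT₁ : ∀ A, T₁ (A ∩ (S₁ \ S₂).erase e) = T₁ A :=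
      sdiff_insert_sdiff_of_subset e hF ▸ h₁.apply_inter_sdiff
    have hT₀ : ∀ A, T₀ (A ∩ (S₁ \ S₂).erase e) = T₀ A :=
      erase_union_sdiff_of_subset e (hF.trans sdiff_subset) ▸ h₀.apply_inter_sdiff
    simp only [mem_inter, he, and_true]
    split_ifs
    · rw [← hT₁ A, ← hT₁ (A ∩ _), inter_assoc, inter_eq_right.2 (erase_subset e _)]
    · rw [← hT₀ A, ← hT₀ (A ∩ _), inter_assoc, inter_eq_right.2 (erase_subset e _)]
  expec_notMem_le _ hf := expec_notMem_ite_le hp0 hp1 hF h₁ h₀ hf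

theorem exists_isExchangeMap (M : FinMatroid E) (hp0 : 0 ≤ p) (hp1 : p ≤ 1)
    (h₁ : M.Indep S₁) (h₂ : M.Indep S₂) : ∃ T, M.IsExchangeMap p S₁ S₂ T := by
  induction hn : (S₁ \ S₂).card generalizing S₁ S₂ with
  | zero => exact ⟨_, isExchangeMap_const hp0 h₂ (card_eq_zero.1 hn)⟩
  | succ n ih =>
    obtain ⟨e, he⟩ := card_pos.1 (by rw [hn]; exact n.succ_pos)
    obtain ⟨F, hF, hF₁, hF₀⟩ := M.exists_exchange_subset h₁ h₂ he
    obtain ⟨T₁, hT₁⟩ := ih h₁ hF₁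
      (by rw [sdiff_insert_sdiff_of_subset e hF, card_erase_of_mem he, hn]; rfl)
    obtain ⟨T₀, hT₀⟩ := ih hF₀ h₂
      (by rw [erase_union_sdiff_of_subset e (hF.trans sdiff_subset), card_erase_of_mem he, hn]; rfl)
    exact ⟨_, hT₁.ite hp0 hp1 he hF hT₀⟩

end FinMatroid

/-- Basis exchange map for a single matroid: given independent sets
`S₁, S₂` of `M`, there is a deterministic map `T` on realizations of the random set `R`
such that always `S₁ ∩ S₂ ⊆ T(R)`, `T(R)` is independent, `T(R) ⊆ (S₁ ∩ R) ∪ S₂`, and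
`(S₁ ∖ S₂) ∩ R ⊆ T(R)` (hence `Pr[e ∈ T(R)] = p` for `e ∈ S₁ ∖ S₂`), while
`Pr[f ∈ T(R)] ≥ 1 − p` for every `f ∈ S₂ ∖ S₁`. -/
theorem stmt_9 (M : FinMatroid E) (S₁ S₂ : Finset E)
    (h1 : M.Indep S₁) (h2 : M.Indep S₂)
    (p : ℝ) (hp0 : 0 ≤ p) (hp1 : p ≤ 1) :
    ∃ T : Finset E → Finset E,
      (∀ A, S₁ ∩ S₂ ⊆ T A) ∧
      (∀ A, M.Indep (T A)) ∧
      (∀ A, T A ⊆ (S₁ ∩ A) ∪ S₂) ∧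
      (∀ A, (S₁ \ S₂) ∩ A ⊆ T A) ∧
      (∀ e ∈ S₁ \ S₂,
        expec (fun _ => p) (fun A => if e ∈ T A then 1 else 0) = p) ∧
      (∀ f ∈ S₂ \ S₁,
        1 - p ≤ expec (fun _ => p) (fun A => if f ∈ T A then 1 else 0)) := by
  obtain ⟨T, hT⟩ := M.exists_isExchangeMap hp0 hp1 h1 h2
  refine ⟨T, hT.inter_subset, hT.indep, hT.subset_union, hT.sdiff_inter_subset, fun e he => ?_,
    fun f hf => ?_⟩
  · simpa only [hT.mem_iff he] using expec_indicator_mem (fun _ => p) e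
  · have hcompl : (fun A => if f ∈ T A then (1 : ℝ) else 0) =
        fun A => 1 - if f ∈ T A then 0 else 1 := funext fun A => by split_ifs <;> norm_num
    rw [hcompl, expec_one_sub]
    linarith [hT.expec_notMem_le f hf]
end
end
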